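/- Let G be a finite simple graph. For every vertex v ∈ ker(G) there exists an inclusion-minimal independent set X with d(X) > 0 such that v ∈ X. -/

import Mathlib

open Finset

namespace CritGraph

variable {V : Type*} [Fintype V] [DecidableEq V]

/-- The neighborhood of a set of vertices `X`:
all vertices having at least one neighbor in `X`. -/
def nbhd (G : SimpleGraph V) [DecidableRel G.Adj] (X : Finset V) : Finset V :=
  univ.filter fun v => ∃ x ∈ X, G.Adj v x

/-- The difference `d(X) = |X| - |N(X)|` of a set of vertices `X`. -/
def diff (G : SimpleGraph V) [DecidableRel G.Adj] (X : Finset V) : ℤ :=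
  (X.card : ℤ) - ((nbhd G X).card : ℤ)

/-- A set of vertices is independent if no two of its vertices are adjacent. -/
def IsIndep (G : SimpleGraph V) (S : Finset V) : Prop :=
  ∀ u ∈ S, ∀ v ∈ S, ¬ G.Adj u v

instance (G : SimpleGraph V) [DecidableRel G.Adj] : DecidablePred (IsIndep G) := fun S =>
  inferInstanceAs (Decidable (∀ u ∈ S, ∀ v ∈ S, ¬ G.Adj u v))

/-- The critical difference `d_c(G) = max {d(X) : X ⊆ V}`. -/
def dC (G : SimpleGraph V) [DecidableRel G.Adj] : ℤ :=
  (univ : Finset V).powerset.sup' (Finset.powerset_nonempty _) (diff G)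

/-- The critical independence difference `id_c(G) = max {d(I) : I independent}`. -/
def idC (G : SimpleGraph V) [DecidableRel G.Adj] : ℤ :=
  ((univ : Finset V).powerset.filter (IsIndep G)).sup'
    ⟨∅, by simp [IsIndep]⟩ (diff G)

/-- `A` is a critical independent set: `A` is independent and
`d(A) = max {d(I) : I independent}`. -/
def IsCritIndep (G : SimpleGraph V) [DecidableRel G.Adj] (A : Finset V) : Prop :=
  IsIndep G A ∧ ∀ I : Finset V, IsIndep G I → diff G I ≤ diff G A

instance (G : SimpleGraph V) [DecidableRel G.Adj] : DecidablePred (IsCritIndep G) := fun A =>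
  inferInstanceAs (Decidable (IsIndep G A ∧ ∀ I : Finset V, IsIndep G I → diff G I ≤ diff G A))

/-- `ker(G)`: the intersection of all critical independent sets of `G`. -/
def kerG (G : SimpleGraph V) [DecidableRel G.Adj] : Finset V :=
  univ.filter fun v => ∀ A : Finset V, IsCritIndep G A → v ∈ A

/-- `G - v`: the induced subgraph of `G` on `V \ {v}`. -/
def deleteVert (G : SimpleGraph V) (v : V) : SimpleGraph {u : V // u ≠ v} :=
  G.comap Subtype.val

instance (G : SimpleGraph V) (v : V) [DecidableRel G.Adj] :
    DecidableRel (deleteVert G v).Adj := fun a b =>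
  inferInstanceAs (Decidable (G.Adj a.val b.val))

/-- `S` is an inclusion-minimal independent set with positive difference. -/
def MinPosIndep (G : SimpleGraph V) [DecidableRel G.Adj] (S : Finset V) : Prop :=
  IsIndep G S ∧ 0 < diff G S ∧ ∀ S' ⊂ S, ¬ (IsIndep G S' ∧ 0 < diff G S')

/-- `S` is a maximum independent set. -/
def IsMaxIndep (G : SimpleGraph V) (S : Finset V) : Prop :=
  IsIndep G S ∧ ∀ I : Finset V, IsIndep G I → I.card ≤ S.card

instance (G : SimpleGraph V) [DecidableRel G.Adj] : DecidablePred (IsMaxIndep G) := fun S =>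
  inferInstanceAs (Decidable (IsIndep G S ∧ ∀ I : Finset V, IsIndep G I → I.card ≤ S.card))

/-- `core(G)`: the intersection of all maximum independent sets of `G`. -/
def coreG (G : SimpleGraph V) [DecidableRel G.Adj] : Finset V :=
  univ.filter fun v => ∀ A : Finset V, IsMaxIndep G A → v ∈ A


end CritGraph

/-!
Let `B` be an inclusion-minimal critical independent set; it contains `v`. Removing from `B` the
neighbours of a nonempty `T ⊆ N(B)` must lower the difference, so `T` has more than `|T|`
neighbours in `B`. This surplus form of Hall's condition matches `N(B)` into `B \ {v}` by some
`g`. A minimal `X ⊆ B` that contains `v` and `g(N(X))` is exactly `{v} ∪ g(N(X))`, hence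
`d(X) = 1`; and a subset `D ⊆ X` with `d(D) > 0` is again such a set, hence equal to `X`.
-/

namespace CritGraph

variable {V : Type*} {G : SimpleGraph V}

lemma IsIndep.mono {S T : Finset V} (hT : IsIndep G T) (h : S ⊆ T) : IsIndep G S :=
  fun u hu w hw => hT u (h hu) w (h hw)

variable (G) in
def MatchesInto (g : V → V) (S T : Finset V) : Prop :=
  Set.InjOn g S ∧ ∀ w ∈ S, g w ∈ T ∧ G.Adj w (g w)

lemma MatchesInto.mono_left {g : V → V} {S S' T : Finset V} (h : MatchesInto G g S T)
    (hS : S' ⊆ S) : MatchesInto G g S' T :=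
  ⟨h.1.mono (coe_subset.mpr hS), fun w hw => h.2 w (hS hw)⟩

variable [Fintype V] [DecidableRel G.Adj]

lemma mem_nbhd {X : Finset V} {w : V} : w ∈ nbhd G X ↔ ∃ x ∈ X, G.Adj w x := by
  simp [nbhd]

lemma nbhd_mono {X Y : Finset V} (h : X ⊆ Y) : nbhd G X ⊆ nbhd G Y := fun w hw => by
  obtain ⟨x, hx, hwx⟩ := mem_nbhd.mp hw
  exact mem_nbhd.mpr ⟨x, h hx, hwx⟩

variable [DecidableEq V]

variable (G) in
lemma exists_isCritIndep : ∃ A, IsCritIndep G A := by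
  obtain ⟨A, hA, hmax⟩ :=
    (univ.filter (IsIndep G)).exists_max_image (diff G) ⟨∅, by simp [IsIndep]⟩
  exact ⟨A, (mem_filter.mp hA).2, fun I hI => hmax I (mem_filter.mpr ⟨mem_univ I, hI⟩)⟩

variable (G) in
lemma exists_isCritIndep_forall_ssubset_diff_lt :
    ∃ B, IsCritIndep G B ∧ ∀ C ⊂ B, diff G C < diff G B := by
  obtain ⟨A, hA⟩ := exists_isCritIndep G
  obtain ⟨B, -, hBmin⟩ := exists_minimal_le_of_wellFoundedLT (IsCritIndep G) A hA
  refine ⟨B, hBmin.prop, fun C hCB => ?_⟩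
  by_contra! hle
  exact hBmin.not_prop_of_lt hCB
    ⟨hBmin.prop.1.mono hCB.subset, fun I hI => (hBmin.prop.2 I hI).trans hle⟩

lemma card_lt_card_inter_nbhd {B T : Finset V} (hB : ∀ C ⊂ B, diff G C < diff G B)
    (hTB : T ⊆ nbhd G B) (hT : T.Nonempty) : #T < #(B ∩ nbhd G T) := by
  set S := B ∩ nbhd G T
  have hSB : S ⊆ B := inter_subset_left
  have hS : S.Nonempty := by
    obtain ⟨t, ht⟩ := hT
    obtain ⟨b, hb, htb⟩ := mem_nbhd.mp (hTB ht)
    exact ⟨b, mem_inter.mpr ⟨hb, mem_nbhd.mpr ⟨t, ht, htb.symm⟩⟩⟩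
  have hnbhd : nbhd G (B \ S) ⊆ nbhd G B \ T := fun w hw => by
    obtain ⟨c, hc, hwc⟩ := mem_nbhd.mp hw
    refine mem_sdiff.mpr ⟨nbhd_mono sdiff_subset hw, fun hwT => (mem_sdiff.mp hc).2 ?_⟩
    exact mem_inter.mpr ⟨(mem_sdiff.mp hc).1, mem_nbhd.mpr ⟨w, hwT, hwc.symm⟩⟩
  have hlt := hB _ (sdiff_ssubset hSB hS)
  have hcard := card_le_card hnbhd
  rw [card_sdiff_of_subset hTB] at hcard
  simp only [diff, card_sdiff_of_subset hSB] at hlt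
  have := card_le_card hSB
  have := card_le_card hTB
  omega

lemma exists_matchesInto_nbhd_erase {B : Finset V} (hB : ∀ C ⊂ B, diff G C < diff G B) (v : V) :
    ∃ g, MatchesInto G g (nbhd G B) (B.erase v) := by
  have hall : ∀ A : Finset (nbhd G B),
      #A ≤ #{b | ∃ a ∈ A, b ∈ B.erase v ∧ G.Adj a b} := by
    intro A
    rcases A.eq_empty_or_nonempty with rfl | hA
    · simp
    set T := A.map (Function.Embedding.subtype _)
    have hTB : T ⊆ nbhd G B := by
      intro t ht
      obtain ⟨a, -, rfl⟩ := mem_map.mp ht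
      exact a.2
    have hsub : (B ∩ nbhd G T).erase v ⊆
        ({b | ∃ a ∈ A, b ∈ B.erase v ∧ G.Adj a b} : Finset V) := by
      intro b hb
      obtain ⟨hbv, hbB, hbT⟩ := by simpa only [mem_erase, mem_inter] using hb
      obtain ⟨t, ht, hbt⟩ := mem_nbhd.mp hbT
      obtain ⟨a, ha, rfl⟩ := mem_map.mp ht
      exact mem_filter.mpr ⟨mem_univ b, a, ha, mem_erase.mpr ⟨hbv, hbB⟩, hbt.symm⟩
    calc #A = #T := (card_map _).symm
      _ ≤ #(B ∩ nbhd G T) - 1 := by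
        have := card_lt_card_inter_nbhd hB hTB hA.map
        omega
      _ ≤ #((B ∩ nbhd G T).erase v) := pred_card_le_card_erase
      _ ≤ _ := card_le_card hsub
  obtain ⟨f, hf, hfB⟩ := (Fintype.all_card_le_filter_rel_iff_exists_injective _).mp hall
  refine ⟨fun w => if h : w ∈ nbhd G B then f ⟨w, h⟩ else w, ?_, fun w hw => ?_⟩
  · intro w hw w' hw' h
    simp only [dif_pos (mem_coe.mp hw), dif_pos (mem_coe.mp hw')] at h
    exact congrArg Subtype.val (hf h)
  · simpa only [dif_pos hw] using hfB ⟨w, hw⟩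

section Closure

variable {g : V → V} {v : V} {B X D : Finset V}

lemma eq_insert_image_of_minimal
    (hX : Minimal (fun S => S ⊆ B ∧ v ∈ S ∧ (nbhd G S).image g ⊆ S) X) :
    X = insert v ((nbhd G X).image g) := by
  have hsub : insert v ((nbhd G X).image g) ⊆ X := insert_subset hX.prop.2.1 hX.prop.2.2
  refine (hX.eq_of_le ⟨hsub.trans hX.prop.1, mem_insert_self _ _, ?_⟩ hsub).symm
  exact (image_subset_image (nbhd_mono hsub)).trans (subset_insert _ _)

lemma diff_eq_one_of_eq_insert_image (hg : MatchesInto G g (nbhd G X) (B.erase v))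
    (hX : X = insert v ((nbhd G X).image g)) : diff G X = 1 := by
  have hv : v ∉ (nbhd G X).image g := fun hv => by
    obtain ⟨w, hw, hwv⟩ := mem_image.mp hv
    exact (mem_erase.mp (hg.2 w hw).1).1 hwv
  have hcard : #X = #(nbhd G X) + 1 := calc
    #X = #(insert v ((nbhd G X).image g)) := congrArg card hX
    _ = #(nbhd G X) + 1 := by rw [card_insert_of_notMem hv, card_image_of_injOn hg.1]
  simp only [diff, hcard]
  push_cast
  ring

lemma erase_subset_image_nbhd (hg : ∀ w ∈ nbhd G X, G.Adj w (g w))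
    (hX : X = insert v ((nbhd G X).image g)) (hDX : D ⊆ X) :
    D.erase v ⊆ (nbhd G D).image g := by
  intro b hb
  obtain ⟨hbv, hbD⟩ := mem_erase.mp hb
  obtain ⟨w, hw, rfl⟩ := mem_image.mp ((mem_insert.mp (hX ▸ hDX hbD)).resolve_left hbv)
  exact mem_image_of_mem g (mem_nbhd.mpr ⟨g w, hbD, hg w hw⟩)

lemma mem_and_image_nbhd_subset_of_diff_pos (hinj : Set.InjOn g (nbhd G D))
    (hD : D.erase v ⊆ (nbhd G D).image g) (hpos : 0 < diff G D) :
    v ∈ D ∧ (nbhd G D).image g ⊆ D := by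
  have hle := card_le_card hD
  rw [card_image_of_injOn hinj] at hle
  have hlt : #(nbhd G D) < #D := by simpa only [diff, sub_pos, Nat.cast_lt] using hpos
  have hvD : v ∈ D := by
    by_contra hvD
    rw [erase_eq_of_notMem hvD] at hle
    omega
  refine ⟨hvD, ?_⟩
  rw [← eq_of_subset_of_card_le hD ?_]
  · exact erase_subset v D
  · rw [card_image_of_injOn hinj, card_erase_of_mem hvD]
    omega

lemma exists_minPosIndep_of_matchesInto (hB : IsIndep G B) (hv : v ∈ B)
    (hg : MatchesInto G g (nbhd G B) (B.erase v)) : ∃ X, MinPosIndep G X ∧ v ∈ X := by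
  set P := fun S => S ⊆ B ∧ v ∈ S ∧ (nbhd G S).image g ⊆ S
  have hPB : P B :=
    ⟨subset_rfl, hv, image_subset_iff.mpr fun w hw => mem_of_mem_erase (hg.2 w hw).1⟩
  obtain ⟨X, -, hX⟩ := exists_minimal_le_of_wellFoundedLT P B hPB
  have hXB : X ⊆ B := hX.prop.1
  have hXeq := eq_insert_image_of_minimal hX
  have hgX := hg.mono_left (nbhd_mono hXB)
  refine ⟨X, ⟨hB.mono hXB, ?_, fun D hDX ⟨_, hD⟩ => ?_⟩, hX.prop.2.1⟩
  · rw [diff_eq_one_of_eq_insert_image hgX hXeq]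
    exact one_pos
  have hgD := hgX.mono_left (nbhd_mono hDX.subset)
  have hcover := erase_subset_image_nbhd (fun w hw => (hgX.2 w hw).2) hXeq hDX.subset
  obtain ⟨hvD, hclosed⟩ := mem_and_image_nbhd_subset_of_diff_pos hgD.1 hcover hD
  exact hX.not_prop_of_lt hDX ⟨hDX.subset.trans hXB, hvD, hclosed⟩

end Closure

/-- Every vertex of `ker(G)` lies in some inclusion-minimal independent set with
positive difference. -/
theorem mem_kerG_exists_minPosIndep (G : SimpleGraph V) [DecidableRel G.Adj]
    (v : V) (hv : v ∈ kerG G) :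
    ∃ X : Finset V, MinPosIndep G X ∧ v ∈ X := by
  obtain ⟨B, hB, hBmin⟩ := exists_isCritIndep_forall_ssubset_diff_lt G
  have hvB : v ∈ B := (mem_filter.mp hv).2 B hB
  obtain ⟨g, hg⟩ := exists_matchesInto_nbhd_erase hBmin v
  exact exists_minPosIndep_of_matchesInto hB.1 hvB hg

end CritGraph
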